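/- arXiv:1901.04995 — 3 statements merged into one kernel-verified Lean document; each statement's English description precedes it below -/
import Mathlib

section
/- Let X ≥ 0 a.s. be integrable with U_a = E[X] > 0. Define p(c) = E[exp(c)/(exp(c)+exp(U_a+X))] and q(c) = exp(U_a)/(exp(U_a)+exp(2c)) for c ∈ ℝ. Then p is strictly increasing, q is strictly decreasing, and p(U_a) ≥ q(U_a); consequently any c satisfying p(c) = q(c) satisfies c ≤ U_a. -/
open MeasureTheory Real Set

/-!
Both `p` and `q` are values of the logistic function `σ = Real.sigmoid`:
`p c = 𝔼[σ (c - U_a - X)]` and `q c = σ (U_a - 2c)`, so the monotonicity claims come from that of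
`σ`. On `(-∞, 0]` the logistic function is convex, since its derivative `σ (1 - σ)` increases while
`σ ≤ 1/2`; Jensen's inequality for `-X ≤ 0` then gives `q U_a = σ (-𝔼 X) ≤ 𝔼[σ (-X)] = p U_a`.
A crossing point `c > U_a` would force `q U_a ≤ p U_a < p c = q c < q U_a`.
-/

lemma exp_div_exp_add_exp (a b : ℝ) : exp a / (exp a + exp b) = sigmoid (a - b) := by
  rw [sigmoid_def, neg_sub, exp_sub]
  field_simp

lemma convexOn_sigmoid_Iic : ConvexOn ℝ (Iic 0) sigmoid := by
  refine MonotoneOn.convexOn_of_deriv (convex_Iic 0) continuous_sigmoid.continuousOn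
    differentiable_sigmoid.differentiableOn ?_
  rw [interior_Iic, deriv_sigmoid]
  intro a _ b hb hab
  have hσb : sigmoid b ≤ 2⁻¹ := sigmoid_zero ▸ sigmoid_le (le_of_lt hb)
  have hσab : sigmoid a ≤ sigmoid b := sigmoid_le hab
  nlinarith

section Integral

variable {Ω : Type*} [MeasurableSpace Ω] {μ : Measure Ω}

lemma integral_lt_integral_of_forall_lt [NeZero μ] {f g : Ω → ℝ} (hf : Integrable f μ)
    (hg : Integrable g μ) (hlt : ∀ ω, f ω < g ω) : ∫ ω, f ω ∂μ < ∫ ω, g ω ∂μ := by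
  rw [← sub_pos, ← integral_sub hg hf,
    integral_pos_iff_support_of_nonneg (fun ω => sub_nonneg.2 (hlt ω).le) (hg.sub hf)]
  have hsupp : (Function.support fun ω => g ω - f ω) = univ :=
    eq_univ_of_forall fun ω => sub_ne_zero.2 (hlt ω).ne'
  rw [hsupp, Measure.measure_univ_pos]
  exact NeZero.ne μ

lemma integrable_sigmoid_comp [IsFiniteMeasure μ] {f : Ω → ℝ} (hf : AEStronglyMeasurable f μ) :
    Integrable (fun ω => sigmoid (f ω)) μ :=
  Integrable.of_bound (continuous_sigmoid.comp_aestronglyMeasurable hf) 1 <| ae_of_all _ fun ω => by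
    rw [norm_of_nonneg (sigmoid_nonneg _)]
    exact sigmoid_le_one _

lemma strictMono_integral_sigmoid_sub [IsFiniteMeasure μ] [NeZero μ] {Y : Ω → ℝ}
    (hY : AEStronglyMeasurable Y μ) : StrictMono fun c => ∫ ω, sigmoid (c - Y ω) ∂μ :=
  fun _ _ hab => integral_lt_integral_of_forall_lt
    (integrable_sigmoid_comp (aestronglyMeasurable_const.sub hY))
    (integrable_sigmoid_comp (aestronglyMeasurable_const.sub hY))
    fun _ => sigmoid_lt (sub_lt_sub_right hab _)

lemma sigmoid_integral_le_integral_sigmoid [IsProbabilityMeasure μ] {f : Ω → ℝ}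
    (hf : Integrable f μ) (hf_nonpos : ∀ᵐ ω ∂μ, f ω ≤ 0) :
    sigmoid (∫ ω, f ω ∂μ) ≤ ∫ ω, sigmoid (f ω) ∂μ :=
  convexOn_sigmoid_Iic.map_integral_le continuous_sigmoid.continuousOn isClosed_Iic hf_nonpos hf
    (integrable_sigmoid_comp hf.aestronglyMeasurable)

end Integral

theorem rps_certainty_equiv_gains_general {Ω : Type*} [MeasurableSpace Ω] (μ : Measure Ω)
    [IsProbabilityMeasure μ] (X : Ω → ℝ) (hX : Integrable X μ)
    (hpos : ∀ᵐ ω ∂μ, 0 ≤ X ω) (Ua : ℝ) (hUa : Ua = ∫ ω, X ω ∂μ)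
    (p q : ℝ → ℝ)
    (hp : ∀ c, p c = ∫ ω, Real.exp c / (Real.exp c + Real.exp (Ua + X ω)) ∂μ)
    (hq : ∀ c, q c = Real.exp Ua / (Real.exp Ua + Real.exp (2 * c))) :
    StrictMono p ∧ StrictAnti q ∧ q Ua ≤ p Ua ∧ ∀ c, p c = q c → c ≤ Ua := by
  have hp_sigmoid : p = fun c => ∫ ω, sigmoid (c - (Ua + X ω)) ∂μ := by
    ext c
    simp only [hp, exp_div_exp_add_exp]
  have hq_sigmoid : q = sigmoid ∘ fun c => Ua - 2 * c := by
    ext c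
    simp only [hq, exp_div_exp_add_exp, Function.comp_apply]
  have hp_mono : StrictMono p := hp_sigmoid ▸
    strictMono_integral_sigmoid_sub (aestronglyMeasurable_const.add hX.aestronglyMeasurable)
  have hq_anti : StrictAnti q := hq_sigmoid ▸
    sigmoid_strictMono.comp_strictAnti fun _ _ h => by linarith
  have hqp : q Ua ≤ p Ua := by
    have jensen := sigmoid_integral_le_integral_sigmoid (f := fun ω => -X ω) hX.neg (hpos.mono fun _ => neg_nonpos.2)
    rw [integral_neg, ← hUa] at jensen
    simpa [hp_sigmoid, hq_sigmoid, two_mul] using jensen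
  refine ⟨hp_mono, hq_anti, hqp, fun c hpq => le_of_not_gt fun hc => ?_⟩
  linarith [hp_mono hc, hq_anti hc]

theorem rps_certainty_equiv_gains {Ω : Type*} [MeasurableSpace Ω] (μ : Measure Ω)
    [IsProbabilityMeasure μ] (X : Ω → ℝ) (hX : Integrable X μ)
    (hpos : ∀ᵐ ω ∂μ, 0 ≤ X ω) (Ua : ℝ) (hUa : Ua = ∫ ω, X ω ∂μ) (hUapos : 0 < Ua)
    (p q : ℝ → ℝ)
    (hp : ∀ c, p c = ∫ ω, Real.exp c / (Real.exp c + Real.exp (Ua + X ω)) ∂μ)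
    (hq : ∀ c, q c = Real.exp Ua / (Real.exp Ua + Real.exp (2 * c))) :
    StrictMono p ∧ StrictAnti q ∧ q Ua ≤ p Ua ∧ ∀ c, p c = q c → c ≤ Ua :=
  rps_certainty_equiv_gains_general μ X hX hpos Ua hUa p q hp hq
end

section
/- Let X, Y be random variables with values in [0,∞) such that X first-order stochastically dominates Y (i.e., P(X > t) ≥ P(Y > t) for all t, with strict inequality for some t). Let U : [0,∞) → [0,∞) be strictly increasing and continuous with suitable integrability, and set U_a = E[U(X)], U_b = E[U(Y)]. Then U_b < U_a, and E[U_b/(U_a+U_b+U(X))] < E[U_a/(U_a+U_b+U(Y))]; that is, X is preferred to Y under RPS(1) preferences. -/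
/-!
Everything reduces to the FSD monotonicity of expectations: if `W` is strictly increasing and
continuous on `[0, ∞)`, then `E[W(Y)] ≤ E[W(X)]`, strictly if the dominance is strict somewhere.
By the layer-cake formula `E[W(X)] = ∫_{t > 0} P(t < W(X)) dt` it suffices to compare tail
probabilities, and each level set `{t < W(X)}` is a level set `{c < X}` of `X`, with `W c = t` by
the intermediate value theorem. Strictness at one level persists on a small interval of levels,
by continuity of measure from below.

Applied to `W = U` this gives `U_b < U_a`; applied to `x ↦ (U_a + U_b + U x)⁻¹`, which is strictly
decreasing, it gives `E[1/(U_a+U_b+U(X))] ≤ E[1/(U_a+U_b+U(Y))]`, and multiplying by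
`U_b < U_a` makes the inequality strict.
-/

open MeasureTheory Set

theorem StrictMonoOn.setOf_lt_comp_eq {Ω : Type*} {X : Ω → ℝ} {W : ℝ → ℝ}
    (hW : StrictMonoOn W (Ici 0)) (hX : ∀ ω, 0 ≤ X ω) {c : ℝ} (hc : 0 ≤ c) :
    {ω | W c < W (X ω)} = {ω | c < X ω} :=
  ext fun ω => hW.lt_iff_lt hc (hX ω)

section

variable {Ω : Type*} [MeasurableSpace Ω] {μ : Measure Ω}

theorem integral_le_integral_of_measure_lt_le {f g : Ω → ℝ} (hf : 0 ≤ᵐ[μ] f) (hg : 0 ≤ᵐ[μ] g)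
    (hfi : Integrable f μ) (hgi : Integrable g μ)
    (h : ∀ t, μ {ω | t < f ω} ≤ μ {ω | t < g ω}) :
    ∫ ω, f ω ∂μ ≤ ∫ ω, g ω ∂μ := by
  have key : ENNReal.ofReal (∫ ω, f ω ∂μ) ≤ ENNReal.ofReal (∫ ω, g ω ∂μ) := by
    rw [ofReal_integral_eq_lintegral_ofReal hfi hf, ofReal_integral_eq_lintegral_ofReal hgi hg,
      lintegral_eq_lintegral_meas_lt μ hf hfi.aemeasurable,
      lintegral_eq_lintegral_meas_lt μ hg hgi.aemeasurable]
    exact lintegral_mono h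
  exact (ENNReal.ofReal_le_ofReal_iff (integral_nonneg_of_ae hg)).1 key

theorem integral_lt_integral_of_measure_lt_lt {f g : Ω → ℝ} (hf : 0 ≤ᵐ[μ] f) (hg : 0 ≤ᵐ[μ] g)
    (hfi : Integrable f μ) (hgi : Integrable g μ)
    (h : ∀ t, μ {ω | t < f ω} ≤ μ {ω | t < g ω}) {a b : ℝ} (ha : 0 ≤ a) (hab : a < b)
    (hlt : ∀ t ∈ Ioo a b, μ {ω | t < f ω} < μ {ω | t < g ω}) :
    ∫ ω, f ω ∂μ < ∫ ω, g ω ∂μ := by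
  have hIoo : volume.restrict (Ioi 0) (Ioo a b) ≠ 0 := by
    rw [Measure.restrict_apply measurableSet_Ioo,
      inter_eq_left.2 (Ioo_subset_Ioi_self.trans (Ioi_subset_Ioi ha)), Real.volume_Ioo]
    exact ENNReal.ofReal_pos.2 (sub_pos.2 hab) |>.ne'
  have hfin : ∫⁻ t in Ioi 0, μ {ω | t < f ω} ≠ ⊤ :=
    (lintegral_eq_lintegral_meas_lt μ hf hfi.aemeasurable ▸ hfi.lintegral_lt_top).ne
  have key : ENNReal.ofReal (∫ ω, f ω ∂μ) < ENNReal.ofReal (∫ ω, g ω ∂μ) := by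
    rw [ofReal_integral_eq_lintegral_ofReal hfi hf, ofReal_integral_eq_lintegral_ofReal hgi hg,
      lintegral_eq_lintegral_meas_lt μ hf hfi.aemeasurable,
      lintegral_eq_lintegral_meas_lt μ hg hgi.aemeasurable]
    exact lintegral_strict_mono_of_ae_le_of_ae_lt_on
      (Antitone.measurable (f := fun t => μ {ω | t < g ω})
        fun s t hst => measure_mono fun ω hω => hst.trans_lt hω).aemeasurable
      hfin (ae_of_all _ h) hIoo (ae_of_all _ hlt)
  exact (ENNReal.ofReal_lt_ofReal_iff_of_nonneg (integral_nonneg_of_ae hf)).1 key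

theorem exists_pos_lt_measure_add_lt {f : Ω → ℝ} {t : ℝ} {m : ENNReal}
    (h : m < μ {ω | t < f ω}) : ∃ δ > 0, m < μ {ω | t + δ < f ω} := by
  have hunion : {ω | t < f ω} = ⋃ n : ℕ, {ω | t + 1 / (n + 1) < f ω} := by
    ext ω
    simp only [mem_iUnion]
    refine ⟨fun hω => ?_, fun ⟨n, hn⟩ => (lt_add_of_pos_right t (by positivity)).trans hn⟩
    obtain ⟨n, hn⟩ := exists_nat_one_div_lt (sub_pos.2 (show t < f ω from hω))
    exact ⟨n, show t + 1 / (n + 1 : ℝ) < f ω by linarith⟩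
  have hmono : Monotone fun n : ℕ => {ω | t + 1 / (n + 1 : ℝ) < f ω} := fun m n hmn ω hω =>
    lt_of_le_of_lt (show t + 1 / (n + 1 : ℝ) ≤ t + 1 / (m + 1) by gcongr) hω
  rw [hunion, hmono.measure_iUnion] at h
  obtain ⟨n, hn⟩ := lt_iSup_iff.1 h
  exact ⟨1 / (n + 1), by positivity, hn⟩

def FirstOrderDominates (μ : Measure Ω) (X Y : Ω → ℝ) : Prop :=
  ∀ t : ℝ, μ {ω | t < Y ω} ≤ μ {ω | t < X ω}

variable {X Y : Ω → ℝ} {W : ℝ → ℝ}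

theorem FirstOrderDominates.measure_lt_comp_le (h : FirstOrderDominates μ X Y)
    (hX : ∀ ω, 0 ≤ X ω) (hY : ∀ ω, 0 ≤ Y ω) (hW : StrictMonoOn W (Ici 0))
    (hWc : ContinuousOn W (Ici 0)) (t : ℝ) :
    μ {ω | t < W (Y ω)} ≤ μ {ω | t < W (X ω)} := by
  rcases lt_or_ge t (W 0) with ht | ht
  · have hXuniv : {ω | t < W (X ω)} = univ :=
      eq_univ_of_forall fun ω => ht.trans_le (hW.monotoneOn self_mem_Ici (hX ω) (hX ω))
    exact hXuniv ▸ measure_mono (subset_univ _)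
  by_cases hx : ∃ x, 0 ≤ x ∧ t < W x
  · obtain ⟨x, hx0, hxt⟩ := hx
    obtain ⟨c, hc, rfl⟩ :=
      intermediate_value_Icc hx0 (hWc.mono Icc_subset_Ici_self) ⟨ht, hxt.le⟩
    rw [hW.setOf_lt_comp_eq hY hc.1, hW.setOf_lt_comp_eq hX hc.1]
    exact h c
  · simp only [not_exists, not_and, not_lt] at hx
    have hYempty : {ω | t < W (Y ω)} = ∅ :=
      eq_empty_of_forall_notMem fun ω hω => (hx _ (hY ω)).not_gt hω
    simp [hYempty]

theorem measure_lt_comp_lt_of_mem_Ioo (hX : ∀ ω, 0 ≤ X ω) (hY : ∀ ω, 0 ≤ Y ω)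
    (hW : StrictMonoOn W (Ici 0)) (hWc : ContinuousOn W (Ici 0)) {a b : ℝ} (ha : 0 ≤ a)
    (hab : a ≤ b) (hlt : μ {ω | a < Y ω} < μ {ω | b < X ω}) {s : ℝ} (hs : s ∈ Ioo (W a) (W b)) :
    μ {ω | s < W (Y ω)} < μ {ω | s < W (X ω)} := by
  obtain ⟨c, hc, rfl⟩ := intermediate_value_Icc hab
    (hWc.mono fun x hx => ha.trans hx.1) ⟨hs.1.le, hs.2.le⟩
  have hcb : c < b := hc.2.lt_of_ne (by rintro rfl; exact hs.2.false)
  have hc0 : 0 ≤ c := ha.trans hc.1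
  calc μ {ω | W c < W (Y ω)} = μ {ω | c < Y ω} := by rw [hW.setOf_lt_comp_eq hY hc0]
    _ ≤ μ {ω | a < Y ω} := measure_mono fun ω hω => hc.1.trans_lt hω
    _ < μ {ω | b < X ω} := hlt
    _ ≤ μ {ω | c < X ω} := measure_mono fun ω hω => hcb.trans hω
    _ = μ {ω | W c < W (X ω)} := by rw [hW.setOf_lt_comp_eq hX hc0]

variable [IsFiniteMeasure μ]

/- The layer-cake comparisons need nonnegative integrands, so they are applied to
`W - W 0`, which is nonnegative on `[0, ∞)`. -/
theorem FirstOrderDominates.integral_comp_le (h : FirstOrderDominates μ X Y)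
    (hX : ∀ ω, 0 ≤ X ω) (hY : ∀ ω, 0 ≤ Y ω) (hW : StrictMonoOn W (Ici 0))
    (hWc : ContinuousOn W (Ici 0)) (hXi : Integrable (fun ω => W (X ω)) μ)
    (hYi : Integrable (fun ω => W (Y ω)) μ) :
    ∫ ω, W (Y ω) ∂μ ≤ ∫ ω, W (X ω) ∂μ := by
  have hV : StrictMonoOn (fun x => W x - W 0) (Ici 0) := fun x hx y hy hxy =>
    sub_lt_sub_right (hW hx hy hxy) _
  have hVnn : ∀ x ∈ Ici (0 : ℝ), 0 ≤ W x - W 0 := fun x hx =>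
    sub_nonneg.2 (hW.monotoneOn self_mem_Ici hx hx)
  have key := integral_le_integral_of_measure_lt_le
    (ae_of_all _ fun ω => hVnn _ (hY ω)) (ae_of_all _ fun ω => hVnn _ (hX ω))
    (hYi.sub (integrable_const _)) (hXi.sub (integrable_const _))
    (h.measure_lt_comp_le hX hY hV (hWc.sub continuousOn_const))
  rwa [integral_sub hYi (integrable_const _), integral_sub hXi (integrable_const _),
    sub_le_sub_iff_right] at key

theorem FirstOrderDominates.integral_comp_lt (h : FirstOrderDominates μ X Y)
    (hstrict : ∃ t, μ {ω | t < Y ω} < μ {ω | t < X ω})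
    (hX : ∀ ω, 0 ≤ X ω) (hY : ∀ ω, 0 ≤ Y ω) (hW : StrictMonoOn W (Ici 0))
    (hWc : ContinuousOn W (Ici 0)) (hXi : Integrable (fun ω => W (X ω)) μ)
    (hYi : Integrable (fun ω => W (Y ω)) μ) :
    ∫ ω, W (Y ω) ∂μ < ∫ ω, W (X ω) ∂μ := by
  obtain ⟨t, ht⟩ := hstrict
  have ht0 : 0 ≤ t := by
    by_contra! ht0
    have hYuniv : {ω | t < Y ω} = univ := eq_univ_of_forall fun ω => ht0.trans_le (hY ω)
    exact (hYuniv ▸ ht).not_ge (measure_mono (subset_univ _))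
  obtain ⟨δ, hδ, hδt⟩ := exists_pos_lt_measure_add_lt ht
  have hV : StrictMonoOn (fun x => W x - W 0) (Ici 0) := fun x hx y hy hxy =>
    sub_lt_sub_right (hW hx hy hxy) _
  have hVc : ContinuousOn (fun x => W x - W 0) (Ici 0) := hWc.sub continuousOn_const
  have hVnn : ∀ x ∈ Ici (0 : ℝ), 0 ≤ W x - W 0 := fun x hx =>
    sub_nonneg.2 (hW.monotoneOn self_mem_Ici hx hx)
  have key := integral_lt_integral_of_measure_lt_lt
    (ae_of_all _ fun ω => hVnn _ (hY ω)) (ae_of_all _ fun ω => hVnn _ (hX ω))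
    (hYi.sub (integrable_const _)) (hXi.sub (integrable_const _))
    (h.measure_lt_comp_le hX hY hV hVc) (hVnn t ht0)
    (hV ht0 (by simp only [mem_Ici]; linarith) (lt_add_of_pos_right t hδ))
    fun s hs => measure_lt_comp_lt_of_mem_Ioo hX hY hV hVc ht0 (by linarith) hδt hs
  rwa [integral_sub hYi (integrable_const _), integral_sub hXi (integrable_const _),
    sub_lt_sub_iff_right] at key

theorem FirstOrderDominates.integral_comp_le_of_strictAntiOn (h : FirstOrderDominates μ X Y)
    (hX : ∀ ω, 0 ≤ X ω) (hY : ∀ ω, 0 ≤ Y ω) (hW : StrictAntiOn W (Ici 0))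
    (hWc : ContinuousOn W (Ici 0)) (hXi : Integrable (fun ω => W (X ω)) μ)
    (hYi : Integrable (fun ω => W (Y ω)) μ) :
    ∫ ω, W (X ω) ∂μ ≤ ∫ ω, W (Y ω) ∂μ := by
  simpa only [Pi.neg_apply, integral_neg, neg_le_neg_iff] using
    h.integral_comp_le hX hY hW.neg hWc.neg hXi.neg hYi.neg

theorem integrable_inv_const_add {f : Ω → ℝ} {c : ℝ} (hc : 0 < c)
    (hf : AEStronglyMeasurable f μ) (hf0 : ∀ ω, 0 ≤ f ω) :
    Integrable (fun ω => (c + f ω)⁻¹) μ := by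
  refine (integrable_const c⁻¹).mono' (hf.const_add c).aemeasurable.inv.aestronglyMeasurable
    (ae_of_all _ fun ω => ?_)
  rw [norm_inv, Real.norm_of_nonneg (by linarith [hf0 ω])]
  exact inv_anti₀ hc (by linarith [hf0 ω])

end

theorem rps_respects_fsd_general {Ω : Type*} [MeasurableSpace Ω] (μ : Measure Ω)
    [IsProbabilityMeasure μ] (X Y : Ω → ℝ)
    (hXpos : ∀ ω, 0 ≤ X ω) (hYpos : ∀ ω, 0 ≤ Y ω)
    (hFSD : ∀ t : ℝ, μ {ω | Y ω > t} ≤ μ {ω | X ω > t})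
    (hstrict : ∃ t : ℝ, μ {ω | Y ω > t} < μ {ω | X ω > t})
    (U : ℝ → ℝ) (hUmono : StrictMonoOn U (Set.Ici 0))
    (hUcont : ContinuousOn U (Set.Ici 0)) (hUpos : ∀ x ∈ Set.Ici (0:ℝ), 0 ≤ U x)
    (hXint : Integrable (fun ω => U (X ω)) μ) (hYint : Integrable (fun ω => U (Y ω)) μ)
    (Ua Ub : ℝ) (hUa : Ua = ∫ ω, U (X ω) ∂μ) (hUb : Ub = ∫ ω, U (Y ω) ∂μ) :
    Ub < Ua ∧
      (∫ ω, Ub / (Ua + Ub + U (X ω)) ∂μ) < ∫ ω, Ua / (Ua + Ub + U (Y ω)) ∂μ := by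
  have hdom : FirstOrderDominates μ X Y := hFSD
  have hba : Ub < Ua :=
    hUa ▸ hUb ▸ hdom.integral_comp_lt hstrict hXpos hYpos hUmono hUcont hXint hYint
  have hUb0 : 0 ≤ Ub := hUb ▸ integral_nonneg fun ω => hUpos _ (hYpos ω)
  have hs : 0 < Ua + Ub := by linarith
  have hden : ∀ x ∈ Ici (0 : ℝ), 0 < Ua + Ub + U x := fun x hx =>
    add_pos_of_pos_of_nonneg hs (hUpos x hx)
  have hanti : StrictAntiOn (fun x => (Ua + Ub + U x)⁻¹) (Ici 0) := fun x hx y hy hxy =>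
    inv_strictAnti₀ (hden x hx) (by linarith [hUmono hx hy hxy])
  have hcont : ContinuousOn (fun x => (Ua + Ub + U x)⁻¹) (Ici 0) :=
    (continuousOn_const.add hUcont).inv₀ fun x hx => (hden x hx).ne'
  have hXi := integrable_inv_const_add hs hXint.1 fun ω => hUpos _ (hXpos ω)
  have hYi := integrable_inv_const_add hs hYint.1 fun ω => hUpos _ (hYpos ω)
  have hle := hdom.integral_comp_le_of_strictAntiOn hXpos hYpos hanti hcont hXi hYi
  have hYinv_pos : 0 < ∫ ω, (Ua + Ub + U (Y ω))⁻¹ ∂μ :=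
    (integral_pos_iff_support_of_nonneg (fun ω => (inv_pos.2 (hden _ (hYpos ω))).le) hYi).2
      (by simp [Function.support, fun ω => (hden _ (hYpos ω)).ne'])
  refine ⟨hba, ?_⟩
  simp only [div_eq_mul_inv, integral_const_mul]
  calc Ub * ∫ ω, (Ua + Ub + U (X ω))⁻¹ ∂μ ≤ Ub * ∫ ω, (Ua + Ub + U (Y ω))⁻¹ ∂μ :=
        mul_le_mul_of_nonneg_left hle hUb0
    _ < Ua * ∫ ω, (Ua + Ub + U (Y ω))⁻¹ ∂μ := mul_lt_mul_of_pos_right hba hYinv_pos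

theorem rps_respects_fsd {Ω : Type*} [MeasurableSpace Ω] (μ : Measure Ω)
    [IsProbabilityMeasure μ] (X Y : Ω → ℝ) (hXm : Measurable X) (hYm : Measurable Y)
    (hXpos : ∀ ω, 0 ≤ X ω) (hYpos : ∀ ω, 0 ≤ Y ω)
    (hFSD : ∀ t : ℝ, μ {ω | Y ω > t} ≤ μ {ω | X ω > t})
    (hstrict : ∃ t : ℝ, μ {ω | Y ω > t} < μ {ω | X ω > t})
    (U : ℝ → ℝ) (hUmono : StrictMonoOn U (Set.Ici 0))
    (hUcont : ContinuousOn U (Set.Ici 0)) (hUpos : ∀ x ∈ Set.Ici (0:ℝ), 0 ≤ U x)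
    (hXint : Integrable (fun ω => U (X ω)) μ) (hYint : Integrable (fun ω => U (Y ω)) μ)
    (Ua Ub : ℝ) (hUa : Ua = ∫ ω, U (X ω) ∂μ) (hUb : Ub = ∫ ω, U (Y ω) ∂μ) :
    Ub < Ua ∧
      (∫ ω, Ub / (Ua + Ub + U (X ω)) ∂μ) < ∫ ω, Ua / (Ua + Ub + U (Y ω)) ∂μ :=
  rps_respects_fsd_general μ X Y hXpos hYpos hFSD hstrict U hUmono hUcont hUpos hXint hYint Ua Ub
    hUa hUb
end

section
/- There exist random variables X and Y with E[X] = E[Y] = U_a and a constant c > 0 with c ≠ U_a such that E[c/(U_a+c+X)] = E[c/(U_a+c+Y)] but E[U_a/(2U_a+X)] ≠ E[U_a/(2U_a+Y)]. -/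
/-!
Take `Ua = 1`, `c = 2` and, on three equally likely states, `X = (-1, -1, 5)` and
`Y = (-5/3, 7/3, 7/3)`, both of mean `1`. Then `E[2/(3+X)] = E[2/(3+Y)] = 3/4`, whereas
`E[1/(2+X)] = 5/7` and `E[1/(2+Y)] = 15/13`.
-/

open MeasureTheory

theorem PMF.integral_uniformOfFintype {α E : Type*} [Fintype α] [Nonempty α] [MeasurableSpace α]
    [MeasurableSingletonClass α] [NormedAddCommGroup E] [NormedSpace ℝ E] [CompleteSpace E]
    (f : α → E) :
    ∫ a, f a ∂(uniformOfFintype α).toMeasure = (Fintype.card α : ℝ)⁻¹ • ∑ a, f a := by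
  simp [PMF.integral_eq_sum, Finset.smul_sum]

theorem integral_uniform_fin_three (f : Fin 3 → ℝ) :
    ∫ i, f i ∂(PMF.uniformOfFintype (Fin 3)).toMeasure = (f 0 + f 1 + f 2) / 3 := by
  rw [PMF.integral_uniformOfFintype, Fin.sum_univ_three, Fintype.card_fin, smul_eq_mul]
  ring

theorem rps_not_transitive :
    ∃ (Ω : Type) (_ : MeasurableSpace Ω) (μ : Measure Ω) (_ : IsProbabilityMeasure μ)
      (X Y : Ω → ℝ) (Ua c : ℝ),
      Integrable X μ ∧ Integrable Y μ ∧
      (∫ ω, X ω ∂μ) = Ua ∧ (∫ ω, Y ω ∂μ) = Ua ∧ 0 < c ∧ c ≠ Ua ∧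
      (∫ ω, c / (Ua + c + X ω) ∂μ) = (∫ ω, c / (Ua + c + Y ω) ∂μ) ∧
      (∫ ω, Ua / (2 * Ua + X ω) ∂μ) ≠ (∫ ω, Ua / (2 * Ua + Y ω) ∂μ) := by
  refine ⟨Fin 3, inferInstance, (PMF.uniformOfFintype (Fin 3)).toMeasure, inferInstance,
    ![-1, -1, 5], ![-5/3, 7/3, 7/3], 1, 2,
    .of_finite, .of_finite, ?_, ?_, by norm_num, by norm_num, ?_, ?_⟩ <;>
  · simp only [integral_uniform_fin_three, Matrix.cons_val]
    norm_num
end
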